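/- Let ν be a valuation on K[x] and let φ ∈ KP(ν) be an MLV key polynomial for ν of minimal degree, i.e. deg φ = deg(ν). Then ε(φ) ≥ ε(f) for every non-constant f ∈ K[x]. -/

import Mathlib

open Polynomial

namespace KeyPolPaper

variable {K : Type*} [Field K] {Λ : Type*} [AddCommGroup Λ] [LinearOrder Λ] [IsOrderedAddMonoid Λ]

/-- A valuation on `F[X]` with values in `Λ ∪ {∞}`: multiplicative, satisfies the
ultrametric inequality, and is finite on nonzero constants. -/
def IsValuation {F : Type*} [Field F] (w : F[X] → WithTop Λ) : Prop :=
  w 0 = ⊤ ∧ (∀ f g : F[X], w (f * g) = w f + w g) ∧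
    (∀ f g : F[X], min (w f) (w g) ≤ w (f + g)) ∧
    ∀ a : F, a ≠ 0 → w (C a) ≠ ⊤

/-- `μ ≤ ν` for valuations on `K[X]`. -/
def ValLE (μ ν : K[X] → WithTop Λ) : Prop := ∀ f : K[X], μ f ≤ ν f

/-- `μ < ν` for valuations on `K[X]`. -/
def ValLT (μ ν : K[X] → WithTop Λ) : Prop := ValLE μ ν ∧ μ ≠ ν

/-- ν-equivalence: `f ∼_ν g` iff `ν (f - g) > ν f`. -/
def VEquiv (ν : K[X] → WithTop Λ) (f g : K[X]) : Prop := ν f < ν (f - g)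

/-- ν-divisibility: `h ∣_ν g` iff `g ∼_ν q * h` for some `q`. -/
def VDvd (ν : K[X] → WithTop Λ) (h g : K[X]) : Prop := ∃ q : K[X], VEquiv ν g (q * h)

/-- MacLane–Vaquié key polynomial: monic, ν-minimal and ν-irreducible. -/
def IsMLVKey (ν : K[X] → WithTop Λ) (φ : K[X]) : Prop :=
  φ.Monic ∧ (∀ f : K[X], f ≠ 0 → f.natDegree < φ.natDegree → ¬ VDvd ν φ f) ∧
    ¬ VDvd ν φ 1 ∧ ∀ f g : K[X], VDvd ν φ (f * g) → VDvd ν φ f ∨ VDvd ν φ g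

/-- `e` is the value `ε(f) = max_{b ≥ 1} (ν f - ν (∂_b f)) / b`; phrased multiplicatively,
`e` satisfies `ν f ≤ ν (∂_b f) + b • e` for all `b ≥ 1`, with equality for some `b ≥ 1`.
If `ν f = ∞` then `ε(f) = ∞`. -/
def IsEps (ν : K[X] → WithTop Λ) (f : K[X]) (e : WithTop Λ) : Prop :=
  (ν f = ⊤ ∧ e = ⊤) ∨
    (ν f ≠ ⊤ ∧ (∀ b : ℕ, 1 ≤ b → ν f ≤ ν (hasseDeriv b f) + b • e) ∧
      ∃ b : ℕ, 1 ≤ b ∧ ν f = ν (hasseDeriv b f) + b • e)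

/-- The invariant `ε(f)`; well defined (for non-constant `f`) since `Λ` is divisible and
the defining property determines `e` uniquely. -/
noncomputable def eps (ν : K[X] → WithTop Λ) (f : K[X]) : WithTop Λ :=
  letI := Classical.propDecidable (∃ e : WithTop Λ, IsEps ν f e)
  if h : ∃ e : WithTop Λ, IsEps ν f e then h.choose else ⊤

/-- The set `I(f)` of indices `b ≥ 1` with `ν (∂_b f) = ν f - b • ε(f)`. -/
def epsAttain (ν : K[X] → WithTop Λ) (f : K[X]) : Set ℕ :=
  {b : ℕ | 1 ≤ b ∧ ν f = ν (hasseDeriv b f) + b • eps ν f}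

/-- Abstract key polynomial for `ν`. -/
def IsKeyPoly (ν : K[X] → WithTop Λ) (Q : K[X]) : Prop :=
  Q.Monic ∧ 0 < Q.natDegree ∧
    ∀ f : K[X], 0 < f.natDegree → f.natDegree < Q.natDegree → eps ν f < eps ν Q

/-- The `s`-th coefficient of the canonical `Q`-expansion `f = Σ_s a_s Q^s`,
`deg a_s < deg Q`. -/
noncomputable def qCoeff (Q f : K[X]) (s : ℕ) : K[X] := ((· /ₘ Q)^[s] f) %ₘ Q

/-- The truncation `ν_Q (f) = min_s ν (a_s Q^s)`. -/
noncomputable def trunc (ν : K[X] → WithTop Λ) (Q f : K[X]) : WithTop Λ :=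
  (Finset.range (f.natDegree + 1)).inf fun s => ν (qCoeff Q f s * Q ^ s)

/-- `S_{ν,Q}(f)`: the set of indices attaining the minimum in `ν_Q(f)`. -/
def attain (ν : K[X] → WithTop Λ) (Q f : K[X]) : Set ℕ :=
  {s : ℕ | ν (qCoeff Q f s * Q ^ s) = trunc ν Q f}

/-- The augmented valuation `[μ; φ, γ] (f) = min_s (μ (a_s) + s • γ)` on φ-expansions. -/
noncomputable def augVal (μ : K[X] → WithTop Λ) (φ : K[X]) (γ : WithTop Λ) (f : K[X]) :
    WithTop Λ :=
  (Finset.range (f.natDegree + 1)).inf fun s => μ (qCoeff φ f s) + s • γ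

/-- `Φ_{μ,ν}`: monic polynomials of minimal degree with `μ φ < ν φ`. -/
def PhiSet (μ ν : K[X] → WithTop Λ) : Set K[X] :=
  {φ : K[X] | φ.Monic ∧ μ φ < ν φ ∧
    ∀ ψ : K[X], ψ.Monic → μ ψ < ν ψ → φ.natDegree ≤ ψ.natDegree}

/-- `mult f`: the least `b ≥ 1` with `∂_b f ≠ 0`. -/
noncomputable def multOf (f : K[X]) : ℕ := sInf {b : ℕ | 1 ≤ b ∧ hasseDeriv b f ≠ 0}

/-- Abstract limit key polynomial for `ν` (conditions (K1)-(K4)). -/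
def IsLimitKeyPoly (ν : K[X] → WithTop Λ) (Q : K[X]) : Prop :=
  Q.Monic ∧
    ∃ Qm : K[X], IsKeyPoly ν Qm ∧ ValLT (trunc ν Qm) ν ∧
      (∃ χ ∈ PhiSet (trunc ν Qm) ν, Qm.natDegree = χ.natDegree) ∧
      (∀ χ ∈ PhiSet (trunc ν Qm) ν, ∃ χ' ∈ PhiSet (trunc ν Qm) ν, ν χ < ν χ') ∧
      (∀ χ ∈ PhiSet (trunc ν Qm) ν, trunc ν χ Q < ν Q) ∧
      ∀ Q' : K[X], Q'.Monic →
        (∀ χ ∈ PhiSet (trunc ν Qm) ν, trunc ν χ Q' < ν Q') → Q.natDegree ≤ Q'.natDegree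

/-- A continuous MacLane chain of stable degree `m`: valuations `ρ_0 < ρ_1 < ⋯`,
monic key polynomials `χ_i` (for `i ≥ 1`) of degree `m`, with
`ρ_i = [ρ_{i-1}; χ_i, β_i]`, `β_i = ρ_i (χ_i) > ρ_{i-1} (χ_i)` and
`χ_{i+1} ∤_{ρ_i} χ_i`. -/
structure MacLaneChain (K : Type*) [Field K] (Λ : Type*) [AddCommGroup Λ] [LinearOrder Λ] [IsOrderedAddMonoid Λ] where
  m : ℕ
  hm : 0 < m
  ρ : ℕ → K[X] → WithTop Λ
  χ : ℕ → K[X]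
  β : ℕ → Λ
  isVal : ∀ i : ℕ, IsValuation (ρ i)
  mono : ∀ i : ℕ, ValLT (ρ i) (ρ (i + 1))
  monicChi : ∀ i : ℕ, (χ (i + 1)).Monic
  degChi : ∀ i : ℕ, (χ (i + 1)).natDegree = m
  keyChi : ∀ i : ℕ, IsMLVKey (ρ i) (χ (i + 1))
  beta_def : ∀ i : ℕ, ρ (i + 1) (χ (i + 1)) = (β (i + 1) : WithTop Λ)
  beta_lt : ∀ i : ℕ, ρ i (χ (i + 1)) < (β (i + 1) : WithTop Λ)
  aug : ∀ i : ℕ, ρ (i + 1) = augVal (ρ i) (χ (i + 1)) (β (i + 1) : WithTop Λ)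
  not_dvd : ∀ i : ℕ, ¬ VDvd (ρ (i + 1)) (χ (i + 2)) (χ (i + 1))

/-- A polynomial is stable w.r.t. the chain if its values `ρ_i f` are eventually constant. -/
def MacLaneChain.Stable (ch : MacLaneChain K Λ) (f : K[X]) : Prop :=
  ∃ i0 : ℕ, ∀ i : ℕ, i0 ≤ i → ch.ρ i f = ch.ρ i0 f

/-- The chain is essential: non-stable polynomials exist and all have degree `> m`. -/
def MacLaneChain.Essential (ch : MacLaneChain K Λ) : Prop :=
  (∃ f : K[X], ¬ ch.Stable f) ∧ ∀ f : K[X], ¬ ch.Stable f → ch.m < f.natDegree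

/-- MLV limit key polynomials of the chain: monic non-stable polynomials of minimal
degree `m_∞`. -/
def MacLaneChain.IsLimKP (ch : MacLaneChain K Λ) (φ : K[X]) : Prop :=
  φ.Monic ∧ ¬ ch.Stable φ ∧ ∀ f : K[X], ¬ ch.Stable f → φ.natDegree ≤ f.natDegree

/-- Convex subgroup of a linearly ordered abelian group. -/
def IsConvexSubgroup (H : AddSubgroup Λ) : Prop :=
  ∀ x y : Λ, 0 < x → x < y → y ∈ H → x ∈ H

/-- The value group of a valuation: the subgroup of `Λ` generated by the finite values. -/
def valueGroup {F : Type*} [Field F] (ρ : F[X] → WithTop Λ) : AddSubgroup Λ :=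
  AddSubgroup.closure {γ : Λ | ∃ f : F[X], ρ f = (γ : WithTop Λ)}


variable [Module ℚ Λ]

/-!
If some nonzero polynomial has value `∞`, the support of `ν` is a nonzero prime, hence
maximal, ideal of `K[X]`; as `φ ∤_ν 1`, `φ` is not invertible modulo it, so `ν φ = ∞` and
`ε(φ) = ∞`. Otherwise all values `ε` are finite. With `E = ε(φ)`, one shows `ε(f) ≤ E` by
induction on `deg f`. If `deg f ≥ deg φ`, write `f = r + φ q`: ν-minimality of `φ` gives
`ν f = min (ν r) (ν (φ q))`, and the Leibniz rule for Hasse derivatives gives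
`ε(φ q) ≤ max ε(φ) ε(q)`. If `deg f < deg φ` but `ε(f) = e > E`, expand `φ = ∑ c_s f^s` with
`deg c_s < deg f`, so that `ε(c_s) ≤ E < e`. Let `j = max I(f)` and let `s₀` be the largest
index among the terms of least value `w`; then `ν (∂_{s₀ j} φ) = w - s₀ j e`. For `s₀ = 0`
this says `φ ∣_ν c₀`, contradicting ν-minimality; for `s₀ > 0` it gives
`ν φ ≥ w > ν (∂_{s₀ j} φ) + s₀ j E`, contradicting `ε(φ) = E`.
-/

section

variable {Γ : Type*} [AddCommGroup Γ] [LinearOrder Γ] [IsOrderedAddMonoid Γ]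

theorem IsValuation.map_one {ν : K[X] → WithTop Γ} (hν : IsValuation ν) : ν 1 = 0 := by
  have h1 : ν 1 ≠ ⊤ := by simpa using hν.2.2.2 1 one_ne_zero
  have h := hν.2.1 1 1
  rw [mul_one] at h
  lift ν 1 to Γ using h1 with g
  rw [← WithTop.coe_add, WithTop.coe_eq_coe] at h
  exact_mod_cast left_eq_add.mp h

noncomputable def IsValuation.toAddValuation {ν : K[X] → WithTop Γ} (hν : IsValuation ν) :
    AddValuation K[X] (WithTop Γ) :=
  AddValuation.of ν hν.1 hν.map_one hν.2.2.1 hν.2.1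

theorem le_add_coe_iff {x y : WithTop Γ} {c : Γ} : x ≤ y + c ↔ x + ↑(-c) ≤ y := by
  conv_rhs => rw [← WithTop.add_le_add_iff_right (WithTop.coe_ne_top (a := c))]
  rw [add_assoc, ← WithTop.coe_add, neg_add_cancel, WithTop.coe_zero, add_zero]

theorem lt_add_coe_iff {x y : WithTop Γ} {c : Γ} : x < y + c ↔ x + ↑(-c) < y := by
  conv_rhs => rw [← WithTop.add_lt_add_iff_right (WithTop.coe_ne_top (a := c))]
  rw [add_assoc, ← WithTop.coe_add, neg_add_cancel, WithTop.coe_zero, add_zero]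

section AddValuation

variable {R ι : Type*} [Ring R] (v : AddValuation R (WithTop Γ)) {S : Finset ι} {t : ι → R}
  {x : WithTop Γ} {c : Γ}

theorem le_map_sum_add_coe (h : ∀ i ∈ S, x ≤ v (t i) + c) : x ≤ v (∑ i ∈ S, t i) + c :=
  le_add_coe_iff.mpr (v.map_le_sum fun i hi => le_add_coe_iff.mp (h i hi))

theorem lt_map_sum_add_coe (hx : x ≠ ⊤) (h : ∀ i ∈ S, x < v (t i) + c) :
    x < v (∑ i ∈ S, t i) + c :=
  lt_add_coe_iff.mpr (v.map_lt_sum (by simpa using hx) fun i hi => lt_add_coe_iff.mp (h i hi))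

theorem eq_map_sum_add_coe [DecidableEq ι] {i₀ : ι} (hi₀ : i₀ ∈ S) (hx : x ≠ ⊤)
    (h₀ : x = v (t i₀) + c) (h : ∀ i ∈ S, i ≠ i₀ → x < v (t i) + c) :
    x = v (∑ i ∈ S, t i) + c := by
  have hc : (c : WithTop Γ) ≠ ⊤ := WithTop.coe_ne_top
  rw [← Finset.add_sum_erase S t hi₀, v.map_add_eq_of_lt_left, h₀]
  refine v.map_lt_sum (fun h' => hx (by rw [h₀, h', top_add])) fun i hi => ?_
  rw [← WithTop.add_lt_add_iff_right hc, ← h₀]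
  exact h i (Finset.mem_of_mem_erase hi) (Finset.ne_of_mem_erase hi)

theorem map_pow_ne_top {f : R} (hf : v f ≠ ⊤) (n : ℕ) : v (f ^ n) ≠ ⊤ := by
  obtain ⟨a, ha⟩ := WithTop.ne_top_iff_exists.mp hf
  rw [v.map_pow, ← ha, ← WithTop.coe_nsmul]
  exact WithTop.coe_ne_top

end AddValuation

theorem nsmul_top {n : ℕ} (hn : n ≠ 0) : n • (⊤ : WithTop Γ) = ⊤ := by
  obtain ⟨k, rfl⟩ := Nat.exists_eq_succ_of_ne_zero hn
  rw [succ_nsmul, add_top]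

theorem IsEps.bound {ν : K[X] → WithTop Γ} {f : K[X]} {e : WithTop Γ} (h : IsEps ν f e) :
    ∀ b : ℕ, 1 ≤ b → ν f ≤ ν (hasseDeriv b f) + b • e := by
  rcases h with ⟨-, rfl⟩ | ⟨-, h, -⟩
  · intro b hb
    rw [nsmul_top (by omega), add_top]
    exact le_top
  · exact h

theorem IsEps.le_of_bound {ν : K[X] → WithTop Γ} {f : K[X]} {e e' : WithTop Γ} (h : IsEps ν f e)
    (hf : ν f ≠ ⊤) (h' : ∀ b : ℕ, 1 ≤ b → ν f ≤ ν (hasseDeriv b f) + b • e') : e ≤ e' := by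
  rcases h with ⟨hf', -⟩ | ⟨-, -, b, hb, heq⟩
  · exact absurd hf' hf
  rcases eq_or_ne e' ⊤ with rfl | he'
  · exact le_top
  have hd : ν (hasseDeriv b f) ≠ ⊤ := fun h => hf (by rw [heq, h, top_add])
  have he : e ≠ ⊤ := fun h => hf (by rw [heq, h, nsmul_top (by omega), add_top])
  lift e to Γ using he
  lift e' to Γ using he'
  have hle := heq ▸ h' b hb
  rw [WithTop.add_le_add_iff_left hd, ← WithTop.coe_nsmul, ← WithTop.coe_nsmul,
    WithTop.coe_le_coe, nsmul_le_nsmul_iff_right (by omega)] at hle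
  exact WithTop.coe_le_coe.mpr hle

theorem eps_eq_of_isEps {ν : K[X] → WithTop Γ} {f : K[X]} {e : WithTop Γ} (h : IsEps ν f e) :
    eps ν f = e := by
  have hex : ∃ e, IsEps ν f e := ⟨e, h⟩
  have hspec : IsEps ν f (eps ν f) := by
    rw [eps, dif_pos hex]
    exact hex.choose_spec
  by_cases hf : ν f = ⊤
  · rcases h with ⟨-, rfl⟩ | ⟨hf', -⟩
    · rcases hspec with ⟨-, h⟩ | ⟨hf', -⟩
      exacts [h, absurd hf hf']
    · exact absurd hf hf'
  · exact le_antisymm (hspec.le_of_bound hf h.bound) (h.le_of_bound hf hspec.bound)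

section EpsBounds

variable (v : AddValuation K[X] (WithTop Γ))

/-- `ε(f) ≤ e`. -/
def EpsLE (f : K[X]) (e : Γ) : Prop :=
  ∀ b : ℕ, v f ≤ v (hasseDeriv b f) + ((b • e : Γ) : WithTop Γ)

/-- For `e = ε(f)`, this says `j = max I(f)`. -/
def IsMaxEpsIndex (f : K[X]) (e : Γ) (j : ℕ) : Prop :=
  v f = v (hasseDeriv j f) + ((j • e : Γ) : WithTop Γ) ∧
    ∀ i : ℕ, j < i → v f < v (hasseDeriv i f) + ((i • e : Γ) : WithTop Γ)

variable {v}

theorem epsLE_of_natDegree_eq_zero {f : K[X]} (hf : f.natDegree = 0) (e : Γ) : EpsLE v f e := by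
  rintro (_ | b)
  · simp
  · rw [hasseDeriv_eq_zero_of_lt_natDegree f _ (by omega), v.map_zero, top_add]
    exact le_top

theorem EpsLE.mono {f : K[X]} {e e' : Γ} (h : EpsLE v f e) (he : e ≤ e') : EpsLE v f e' :=
  fun b => (h b).trans (add_le_add le_rfl (WithTop.coe_le_coe.mpr (nsmul_le_nsmul_right he b)))

theorem EpsLE.add {u w : K[X]} {e : Γ} (hu : EpsLE v u e) (hw : EpsLE v w e)
    (huw : v (u + w) ≤ min (v u) (v w)) : EpsLE v (u + w) e := fun b =>
  calc v (u + w) ≤ min (v u) (v w) := huw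
    _ ≤ min (v (hasseDeriv b u)) (v (hasseDeriv b w)) + ((b • e : Γ) : WithTop Γ) := by
      rw [← min_add_add_right]; exact min_le_min (hu b) (hw b)
    _ ≤ v (hasseDeriv b (u + w)) + ((b • e : Γ) : WithTop Γ) := by
      rw [map_add]; exact add_le_add_left (v.map_add _ _) _

theorem map_hasseDeriv_mul_add_nsmul {u w : K[X]} {e : Γ} (p : ℕ × ℕ) :
    v (hasseDeriv p.1 u * hasseDeriv p.2 w) + (((p.1 + p.2) • e : Γ) : WithTop Γ) =
      (v (hasseDeriv p.1 u) + ((p.1 • e : Γ) : WithTop Γ)) +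
        (v (hasseDeriv p.2 w) + ((p.2 • e : Γ) : WithTop Γ)) := by
  rw [v.map_mul, add_nsmul, WithTop.coe_add, add_add_add_comm]

theorem EpsLE.mul {u w : K[X]} {e : Γ} (hu : EpsLE v u e) (hw : EpsLE v w e) :
    EpsLE v (u * w) e := by
  intro b
  rw [hasseDeriv_mul]
  refine le_map_sum_add_coe v fun p hp => ?_
  rw [← Finset.HasAntidiagonal.mem_antidiagonal.mp hp, map_hasseDeriv_mul_add_nsmul, v.map_mul]
  exact add_le_add (hu p.1) (hw p.2)

theorem EpsLE.pow {f : K[X]} {e : Γ} (h : EpsLE v f e) (n : ℕ) : EpsLE v (f ^ n) e := by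
  induction n with
  | zero => exact epsLE_of_natDegree_eq_zero (by simp) e
  | succ n ih => rw [pow_succ]; exact ih.mul h

theorem IsMaxEpsIndex.mul {u w : K[X]} {e : Γ} {j k : ℕ} (hu : EpsLE v u e)
    (hu' : IsMaxEpsIndex v u e j) (hw : EpsLE v w e) (hw' : IsMaxEpsIndex v w e k)
    (hu0 : v u ≠ ⊤) (hw0 : v w ≠ ⊤) : IsMaxEpsIndex v (u * w) e (j + k) := by
  have huw : v (u * w) ≠ ⊤ := by rw [v.map_mul]; exact WithTop.add_ne_top.mpr ⟨hu0, hw0⟩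
  have hlt : ∀ p : ℕ × ℕ, j < p.1 ∨ k < p.2 → v (u * w) <
      v (hasseDeriv p.1 u * hasseDeriv p.2 w) + (((p.1 + p.2) • e : Γ) : WithTop Γ) := by
    rintro p (h | h) <;> rw [map_hasseDeriv_mul_add_nsmul, v.map_mul]
    · exact WithTop.add_lt_add_of_lt_of_le hw0 (hu'.2 _ h) (hw p.2)
    · exact WithTop.add_lt_add_of_le_of_lt hu0 (hu p.1) (hw'.2 _ h)
  constructor
  · rw [hasseDeriv_mul]
    refine eq_map_sum_add_coe v (i₀ := (j, k)) (by simp) huw ?_ fun p hp hne => ?_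
    · rw [map_hasseDeriv_mul_add_nsmul (j, k), ← hu'.1, ← hw'.1, v.map_mul]
    · have hp := Finset.HasAntidiagonal.mem_antidiagonal.mp hp
      rw [← hp]
      exact hlt p (by_contra fun h =>
        hne (Prod.ext (show p.1 = j by omega) (show p.2 = k by omega)))
  · intro i hi
    rw [hasseDeriv_mul]
    refine lt_map_sum_add_coe v huw fun p hp => ?_
    have := Finset.HasAntidiagonal.mem_antidiagonal.mp hp
    rw [← this]
    exact hlt p (by omega)

theorem isMaxEpsIndex_one (e : Γ) : IsMaxEpsIndex v 1 e 0 := by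
  refine ⟨by simp, fun i hi => ?_⟩
  rw [hasseDeriv_apply_one _ hi, v.map_zero, top_add, v.map_one]
  exact WithTop.coe_lt_top 0

theorem IsMaxEpsIndex.pow {f : K[X]} {e : Γ} {j : ℕ} (h : EpsLE v f e) (h' : IsMaxEpsIndex v f e j)
    (hf : v f ≠ ⊤) (n : ℕ) : IsMaxEpsIndex v (f ^ n) e (n * j) := by
  induction n with
  | zero => simpa using isMaxEpsIndex_one e
  | succ n ih =>
    rw [pow_succ, add_mul, one_mul]
    exact ih.mul (h.pow n) h h' (map_pow_ne_top v hf n) hf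

theorem isMaxEpsIndex_zero_of_epsLE {c : K[X]} {E e : Γ} (hc : EpsLE v c E) (hEe : E < e)
    (hc0 : v c ≠ ⊤) : IsMaxEpsIndex v c e 0 := by
  refine ⟨by simp, fun i hi => ?_⟩
  rcases eq_or_ne (v (hasseDeriv i c)) ⊤ with h | h
  · rw [h, top_add]; exact hc0.lt_top
  · refine (hc i).trans_lt ((WithTop.add_lt_add_iff_left h).mpr ?_)
    exact WithTop.coe_lt_coe.mpr (nsmul_lt_nsmul_right (by omega) hEe)

theorem IsEps.epsLE {f : K[X]} {e : Γ} (h : IsEps v f e) : EpsLE v f e := by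
  rintro (_ | b)
  · simp
  · rw [WithTop.coe_nsmul]; exact h.bound _ (by omega)

theorem IsEps.exists_isMaxEpsIndex {f : K[X]} {e : Γ} (h : IsEps v f e) :
    ∃ j, 1 ≤ j ∧ IsMaxEpsIndex v f e j := by
  classical
  have hle := h.epsLE
  rcases h with ⟨-, h⟩ | ⟨hf, -, b, hb, hbeq⟩
  · exact absurd h WithTop.coe_ne_top
  let P i := 1 ≤ i ∧ v f = v (hasseDeriv i f) + ((i • e : Γ) : WithTop Γ)
  have hdeg : ∀ i, P i → i ≤ f.natDegree := fun i hi => by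
    by_contra! hlt
    have hi := hi.2
    rw [hasseDeriv_eq_zero_of_lt_natDegree f i hlt, v.map_zero, top_add] at hi
    exact hf hi
  have hPb : P b := ⟨hb, by rw [WithTop.coe_nsmul]; exact hbeq⟩
  have hj := Nat.findGreatest_spec (hdeg b hPb) hPb
  refine ⟨_, hj.1, hj.2, fun i hi => (hle i).lt_of_ne fun heq => ?_⟩
  have hPi : P i := ⟨by omega, heq⟩
  exact Nat.findGreatest_is_greatest hi (hdeg i hPi) hPi

/-- `ε(f)` is the largest of the finitely many slopes `(v f - v (∂_b f)) / b` with
`∂_b f ≠ 0`, which exist since `Γ` is divisible. -/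
theorem exists_isEps [Module ℚ Γ] (hsupp : ∀ g : K[X], g ≠ 0 → v g ≠ ⊤) {f : K[X]}
    (hf : 0 < f.natDegree) : ∃ e : Γ, IsEps v f e := by
  classical
  have hf0 : f ≠ 0 := ne_zero_of_natDegree_gt hf
  set T := (Finset.Icc 1 f.natDegree).filter (fun b => hasseDeriv b f ≠ 0)
  have hT : T.Nonempty := ⟨f.natDegree, by
    simpa [T, hasseDeriv_natDegree_eq_C, hf0] using Nat.one_le_iff_ne_zero.mpr hf.ne'⟩
  have hval : ∀ g, g ≠ 0 → (((v g).untopD 0 : Γ) : WithTop Γ) = v g := fun g hg => by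
    obtain ⟨a, ha⟩ := WithTop.ne_top_iff_exists.mp (hsupp g hg)
    rw [← ha, WithTop.untopD_coe]
  let r : ℕ → Γ := fun b => (b : ℚ)⁻¹ • ((v f).untopD 0 - (v (hasseDeriv b f)).untopD 0)
  have hr : ∀ b ∈ T, b • r b = (v f).untopD 0 - (v (hasseDeriv b f)).untopD 0 := by
    intro b hb
    have hb1 := (Finset.mem_Icc.mp (Finset.mem_filter.mp hb).1).1
    have hb0 : (b : ℚ) ≠ 0 := Nat.cast_ne_zero.mpr (by omega)
    rw [← Nat.cast_smul_eq_nsmul ℚ, smul_smul, mul_inv_cancel₀ hb0, one_smul]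
  have hcoe : ∀ b ∈ T, v f = v (hasseDeriv b f) + ((b • r b : Γ) : WithTop Γ) := by
    intro b hb
    have hd := hval _ (Finset.mem_filter.mp hb).2
    have hf' := hval f hf0
    rw [hr b hb]
    set a := (v f).untopD 0
    set d := (v (hasseDeriv b f)).untopD 0
    rw [← hd, ← hf', ← WithTop.coe_add, add_sub_cancel]
  refine ⟨T.sup' hT r, Or.inr ⟨hsupp f hf0, fun b hb => ?_, ?_⟩⟩
  · by_cases hbT : b ∈ T
    · rw [hcoe b hbT, ← WithTop.coe_nsmul]
      exact add_le_add le_rfl (WithTop.coe_le_coe.mpr (nsmul_le_nsmul_right (T.le_sup' r hbT) b))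
    · have hd : hasseDeriv b f = 0 := by
        by_contra hd
        exact hbT (Finset.mem_filter.mpr ⟨Finset.mem_Icc.mpr ⟨hb, by
          by_contra! hlt; exact hd (hasseDeriv_eq_zero_of_lt_natDegree f b hlt)⟩, hd⟩)
      rw [hd, v.map_zero, top_add]
      exact le_top
  · obtain ⟨b, hbT, hb⟩ := T.exists_mem_eq_sup' hT r
    refine ⟨b, (Finset.mem_Icc.mp (Finset.mem_filter.mp hbT).1).1, ?_⟩
    rw [hb, ← WithTop.coe_nsmul]
    exact hcoe b hbT

theorem IsMaxEpsIndex.mul_pow {c f : K[X]} {E e : Γ} {j : ℕ} (hf : EpsLE v f e)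
    (hfj : IsMaxEpsIndex v f e j) (hf0 : v f ≠ ⊤) (hc : EpsLE v c E) (hEe : E < e)
    (hc0 : v c ≠ ⊤) (s : ℕ) : IsMaxEpsIndex v (c * f ^ s) e (s * j) := by
  simpa using (isMaxEpsIndex_zero_of_epsLE hc hEe hc0).mul (hc.mono hEe.le) (hf.pow s)
    (hfj.pow hf hf0 s) hc0 (map_pow_ne_top v hf0 s)

end EpsBounds

theorem natDegree_div_lt {f g : K[X]} (hg : 0 < g.natDegree) (hgf : g.natDegree ≤ f.natDegree) :
    (f / g).natDegree < f.natDegree := by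
  have hf0 : f ≠ 0 := ne_zero_of_natDegree_gt (hg.trans_le hgf)
  rcases eq_or_ne (f / g) 0 with h | h
  · rw [h, natDegree_zero]; omega
  · exact natDegree_lt_natDegree h (degree_div_lt hf0 (natDegree_pos_iff_degree_pos.mp hg))

theorem exists_eq_sum_mul_pow {g : K[X]} (hg : 0 < g.natDegree) (f : K[X]) :
    ∃ (n : ℕ) (c : ℕ → K[X]), (∀ s, (c s).natDegree < g.natDegree) ∧
      f = ∑ s ∈ Finset.range n, c s * g ^ s := by
  induction h : f.natDegree using Nat.strong_induction_on generalizing f with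
  | _ m ih =>
  by_cases hfg : f.natDegree < g.natDegree
  · exact ⟨1, fun _ => f, fun _ => hfg, by simp⟩
  obtain ⟨n, c, hc, hq⟩ := ih _ (h ▸ natDegree_div_lt hg (not_lt.mp hfg)) (f / g) rfl
  refine ⟨n + 1, fun | 0 => f % g | s + 1 => c s, ?_, ?_⟩
  · rintro (_ | s)
    exacts [natDegree_mod_lt f hg.ne', hc s]
  · conv_lhs => rw [← EuclideanDomain.mod_add_div f g, hq]
    simp [Finset.sum_range_succ', Finset.mul_sum, pow_succ, mul_comm, mul_left_comm, add_comm]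

theorem exists_greatest_argmin {α : Type*} [LinearOrder α] {T : Finset ℕ} (hT : T.Nonempty)
    (V : ℕ → α) : ∃ s₀ ∈ T, (∀ s ∈ T, V s₀ ≤ V s) ∧ ∀ s ∈ T, V s = V s₀ → s ≤ s₀ := by
  obtain ⟨s₁, hs₁, hmin⟩ := T.exists_min_image V hT
  obtain ⟨s₀, hs₀, hmax⟩ := (T.filter (V · = V s₁)).exists_max_image id ⟨s₁, by simp [hs₁]⟩
  rw [Finset.mem_filter] at hs₀
  refine ⟨s₀, hs₀.1, fun s hs => hs₀.2 ▸ hmin s hs, fun s hs hVs => ?_⟩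
  exact hmax s (Finset.mem_filter.mpr ⟨hs, hVs.trans hs₀.2⟩)

def IsVMinimal (ν : K[X] → WithTop Γ) (φ : K[X]) : Prop :=
  ∀ f : K[X], f ≠ 0 → f.natDegree < φ.natDegree → ¬ VDvd ν φ f

section Minimal

variable {v : AddValuation K[X] (WithTop Γ)} {φ : K[X]} {E : Γ}

theorem IsVMinimal.map_add_mul (hφ : IsVMinimal v φ) {r : K[X]} (hr : r.natDegree < φ.natDegree)
    (q : K[X]) : v (r + φ * q) = min (v r) (v (φ * q)) := by
  rcases eq_or_ne (v r) (v (φ * q)) with h | h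
  · refine le_antisymm ?_ (v.map_add _ _)
    by_contra! hlt
    rw [← h, min_self] at hlt
    have hr0 : r ≠ 0 := by rintro rfl; simp at hlt
    refine hφ r hr0 hr ⟨-q, ?_⟩
    show v r < v (r - -q * φ)
    rwa [show r - -q * φ = r + φ * q by ring]
  · exact v.map_add_of_distinct_val h

theorem epsLE_of_natDegree_le (hφ : IsVMinimal v φ) (hφ0 : 0 < φ.natDegree)
    (hφE : EpsLE v φ E) {f : K[X]} (ih : ∀ g : K[X], g.natDegree < f.natDegree → EpsLE v g E)
    (hf : φ.natDegree ≤ f.natDegree) : EpsLE v f E := by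
  have hr := natDegree_mod_lt f hφ0.ne'
  rw [← EuclideanDomain.mod_add_div f φ]
  exact (ih _ (hr.trans_le hf)).add (hφE.mul (ih _ (natDegree_div_lt hφ0 hf)))
    (hφ.map_add_mul hr _).le

theorem map_hasseDeriv_sum_add_nsmul {T : Finset ℕ} {t : ℕ → K[X]} {e : Γ} {j s₀ : ℕ}
    (hj : 1 ≤ j) (hs₀ : s₀ ∈ T) (hw : v (t s₀) ≠ ⊤) (hmin : ∀ s ∈ T, v (t s₀) ≤ v (t s))
    (hmax : ∀ s ∈ T, v (t s) = v (t s₀) → s ≤ s₀) (hle : ∀ s ∈ T, EpsLE v (t s) e)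
    (htop : ∀ s ∈ T, t s ≠ 0 → IsMaxEpsIndex v (t s) e (s * j)) :
    v (t s₀) = v (hasseDeriv (s₀ * j) (∑ s ∈ T, t s)) + (((s₀ * j) • e : Γ) : WithTop Γ) := by
  classical
  have hne : ∀ s, v (t s) = v (t s₀) → t s ≠ 0 := fun s h h0 => hw (by rw [← h, h0, v.map_zero])
  rw [map_sum]
  refine eq_map_sum_add_coe v hs₀ hw (htop s₀ hs₀ (hne s₀ rfl)).1 fun s hs hss₀ => ?_
  rcases (hmin s hs).lt_or_eq with hlt | heq
  · exact hlt.trans_le (hle s hs _)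
  · have hlt : s < s₀ := (hmax s hs heq.symm).lt_of_ne hss₀
    rw [heq]
    exact (htop s hs (hne s heq.symm)).2 _ (Nat.mul_lt_mul_of_pos_right hlt hj)

theorem epsLE_of_natDegree_lt [Module ℚ Γ] (hsupp : ∀ g : K[X], g ≠ 0 → v g ≠ ⊤)
    (hφ : IsVMinimal v φ) (hφE : EpsLE v φ E) {f : K[X]}
    (ih : ∀ g : K[X], g.natDegree < f.natDegree → EpsLE v g E) (hf : 0 < f.natDegree)
    (hfφ : f.natDegree < φ.natDegree) : EpsLE v f E := by
  obtain ⟨e, he⟩ := exists_isEps hsupp hf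
  by_contra hfE
  have hEe : E < e := lt_of_not_ge fun h => hfE (he.epsLE.mono h)
  obtain ⟨j, hj, hfj⟩ := he.exists_isMaxEpsIndex
  have hf0 := hsupp f (ne_zero_of_natDegree_gt hf)
  have hφ0 : φ ≠ 0 := ne_zero_of_natDegree_gt (hf.trans hfφ)
  obtain ⟨n, c, hc, hφc⟩ := exists_eq_sum_mul_pow hf φ
  have hT : (Finset.range n).Nonempty :=
    Finset.nonempty_range_iff.mpr fun h => hφ0 (by simp [hφc, h])
  obtain ⟨s₀, hs₀, hmin, hmax⟩ := exists_greatest_argmin hT fun s => v (c s * f ^ s)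
  have hw : v (c s₀ * f ^ s₀) ≤ v φ := by rw [hφc]; exact v.map_le_sum hmin
  have hw' : v (c s₀ * f ^ s₀) ≠ ⊤ := ne_top_of_le_ne_top (hsupp φ hφ0) hw
  rcases Nat.eq_zero_or_pos s₀ with rfl | hs₀pos
  · simp only [pow_zero, mul_one] at hw' hmin hmax
    refine hφ (c 0) (fun h => hw' (by rw [h, v.map_zero])) ((hc 0).trans hfφ) ⟨1, ?_⟩
    show v (c 0) < v (c 0 - 1 * φ)
    rw [hφc, ← Finset.add_sum_erase _ _ hs₀, pow_zero, mul_one, one_mul, sub_add_cancel_left,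
      v.map_neg]
    refine v.map_lt_sum hw' fun s hs => ?_
    have hsT := Finset.mem_of_mem_erase hs
    exact (hmin s hsT).lt_of_ne fun h =>
      Finset.ne_of_mem_erase hs (Nat.le_zero.mp (hmax s hsT h.symm))
  · have hB := map_hasseDeriv_sum_add_nsmul hj hs₀ hw' hmin hmax
      (fun s _ => ((ih _ (hc s)).mono hEe.le).mul (he.epsLE.pow s))
      fun s _ hs => hfj.mul_pow he.epsLE hf0 (ih _ (hc s)) hEe
        (hsupp _ (left_ne_zero_of_mul hs)) s
    rw [← hφc] at hB
    have hd : v (hasseDeriv (s₀ * j) φ) ≠ ⊤ := fun h => hw' (by rw [hB, h, top_add])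
    have hlt := (hφE (s₀ * j)).trans_lt ((WithTop.add_lt_add_iff_left hd).mpr
      (WithTop.coe_lt_coe.mpr (nsmul_lt_nsmul_right (by positivity) hEe)))
    exact (hlt.trans_le (hB ▸ hw)).false

theorem epsLE_of_isVMinimal [Module ℚ Γ] (hsupp : ∀ g : K[X], g ≠ 0 → v g ≠ ⊤)
    (hφ : IsVMinimal v φ) (hφ0 : 0 < φ.natDegree) (hφE : EpsLE v φ E) (f : K[X]) :
    EpsLE v f E := by
  induction h : f.natDegree using Nat.strong_induction_on generalizing f with
  | _ n ih =>
  have ih' : ∀ g : K[X], g.natDegree < f.natDegree → EpsLE v g E :=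
    fun g hg => ih _ (h ▸ hg) g rfl
  rcases Nat.eq_zero_or_pos f.natDegree with h0 | hpos
  · exact epsLE_of_natDegree_eq_zero h0 E
  rcases lt_or_ge f.natDegree φ.natDegree with hlt | hle
  · exact epsLE_of_natDegree_lt hsupp hφ hφE ih' hpos hlt
  · exact epsLE_of_natDegree_le hφ hφ0 hφE ih' hle

end Minimal

section NotVDvdOne

variable (v : AddValuation K[X] (WithTop Γ)) {φ : K[X]}

theorem natDegree_pos_of_not_vDvd_one (hmonic : φ.Monic) (hφ : ¬ VDvd v φ 1) :
    0 < φ.natDegree := by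
  refine Nat.pos_of_ne_zero fun h => hφ ⟨1, ?_⟩
  show v 1 < v (1 - 1 * φ)
  rw [hmonic.natDegree_eq_zero.mp h, one_mul, sub_self, v.map_zero, v.map_one]
  exact WithTop.coe_lt_top 0

theorem map_eq_top_of_not_vDvd_one (hφ : ¬ VDvd v φ 1) {g : K[X]} (hg0 : g ≠ 0)
    (hg : v g = ⊤) : v φ = ⊤ := by
  have hprime : v.supp.IsPrime := Ideal.isPrime_iff.mpr
    ⟨fun h => by simpa [v.map_one] using (v.mem_supp_iff 1).mp (h ▸ Submodule.mem_top),
      fun {x y} hxy => by simpa [AddValuation.mem_supp_iff, v.map_mul] using hxy⟩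
  have hmax := hprime.isMaximal fun h => hg0 <| by
    rw [← Ideal.mem_bot, ← h]; exact (v.mem_supp_iff g).mpr hg
  by_contra hφt
  obtain ⟨y, i, hi, hyi⟩ := hmax.exists_inv (x := φ) (mt (v.mem_supp_iff φ).mp hφt)
  refine hφ ⟨y, ?_⟩
  show v 1 < v (1 - y * φ)
  rw [show 1 - y * φ = i by rw [← hyi]; ring, (v.mem_supp_iff i).mp hi, v.map_one]
  exact WithTop.coe_lt_top 0

end NotVDvdOne

end

theorem stmt10_general (ν : K[X] → WithTop Λ) (hν : IsValuation ν)
    (φ : K[X]) (hφ : IsMLVKey ν φ) :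
    ∀ f : K[X], 0 < f.natDegree → eps ν f ≤ eps ν φ := by
  obtain ⟨v, rfl⟩ : ∃ v : AddValuation K[X] (WithTop Λ), ⇑v = ν := ⟨hν.toAddValuation, rfl⟩
  obtain ⟨hmonic, hφmin, hφ1, -⟩ := hφ
  have hφ0 := natDegree_pos_of_not_vDvd_one v hmonic hφ1
  intro f hf
  by_cases hsupp : ∀ g : K[X], g ≠ 0 → v g ≠ ⊤
  · obtain ⟨E, hE⟩ := exists_isEps hsupp hφ0
    obtain ⟨e, he⟩ := exists_isEps hsupp hf
    rw [eps_eq_of_isEps hE, eps_eq_of_isEps he]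
    refine he.le_of_bound (hsupp f (ne_zero_of_natDegree_gt hf)) fun b _ => ?_
    rw [← WithTop.coe_nsmul]
    exact epsLE_of_isVMinimal hsupp hφmin hφ0 hE.epsLE f b
  · obtain ⟨g, hg0, hg⟩ : ∃ g : K[X], g ≠ 0 ∧ v g = ⊤ := by simpa using hsupp
    rw [eps_eq_of_isEps (Or.inl ⟨map_eq_top_of_not_vDvd_one v hφ1 hg0 hg, rfl⟩)]
    exact le_top

/-- if `φ ∈ KP(ν)` has minimal degree, then `ε(φ) ≥ ε(f)` for all
non-constant `f`. -/
theorem stmt10 (ν : K[X] → WithTop Λ) (hν : IsValuation ν)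
    (φ : K[X]) (hφ : IsMLVKey ν φ)
    (hmin : ∀ ψ : K[X], IsMLVKey ν ψ → φ.natDegree ≤ ψ.natDegree) :
    ∀ f : K[X], 0 < f.natDegree → eps ν f ≤ eps ν φ :=
  stmt10_general ν hν φ hφ

end KeyPolPaper
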